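/- Let a ≥ 40 be a real number, let n be a sufficiently large integer, and let ε be a real number with 0.5 < ε < 1. Then there exists a univariate real polynomial P : ℝ → ℝ such that: (i) P(x) = (−a)^x for every integer x with 0 ≤ x ≤ ε·n; (ii) |P(x)| ≤ a^x / 2 for every integer x with ε·n < x ≤ n; and (iii) the degree of P is at most (1 + 10/a)·ε·n + 3. -/

import Mathlib

/-!
Take `m = ⌊εn⌋`, `s = ⌈10m/a⌉ + 3` and let `P` interpolate `(-a)^j` at `j = 0, …, m` and `0` at
`j = m + 1, …, m + s - 1`, so `deg P < m + s`. For the nodes `0, …, K - 1` and an integer `x ≥ K`,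
the `j`-th Lagrange basis polynomial has absolute value at most `C(x, K) C(K, j)` at `x`; since the
terms `a^j C(m + s, j)` at least double from one `j` to the next,
`|P(x)| ≤ 2 a^m C(x, m + s) C(m + s, m)`. Bounding `C(N, k) ≤ y^k e^{N/y}` with `y = a` for the
first binomial coefficient and `y = a/8` for the second gives `|P(x)| ≤ 2 a^x e^{n/a} (e/8)^s`,
and `s ≥ n/a + 2` makes this at most `a^x / 2`.
-/

open Finset Polynomial Real
open scoped Nat

lemma prod_erase_range_abs_sub {K j : ℕ} (hj : j < K) :
    ∏ i ∈ (range K).erase j, |(j : ℝ) - i| = j ! * (K - 1 - j)! := by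
  have hsplit : (range K).erase j = range j ∪ Ico (j + 1) K := by
    ext i; simp only [mem_erase, mem_range, mem_union, mem_Ico]; omega
  have hdisj : Disjoint (range j) (Ico (j + 1) K) := by
    rw [disjoint_left]; intro i hi hi'; simp only [mem_range, mem_Ico] at hi hi'; omega
  have hlow : ∏ i ∈ range j, |(j : ℝ) - i| = j ! := by
    rw [← abs_prod, ← descPochhammer_eval_eq_prod_range, descPochhammer_eval_eq_descFactorial,
      Nat.descFactorial_self, abs_of_nonneg (Nat.cast_nonneg _)]
  have hhigh : ∏ i ∈ Ico (j + 1) K, |(j : ℝ) - i| = (K - 1 - j)! := by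
    rw [prod_Ico_eq_prod_range, show K - (j + 1) = K - 1 - j by omega,
      ← prod_range_add_one_eq_factorial, Nat.cast_prod]
    refine prod_congr rfl fun k _ => ?_
    rw [abs_sub_comm, abs_of_nonneg (by push_cast; linarith)]
    push_cast; ring
  rw [hsplit, prod_union hdisj, hlow, hhigh]

lemma eval_basis_range {K j : ℕ} (x : ℝ) :
    (Lagrange.basis (range K) (fun i : ℕ => (i : ℝ)) j).eval x =
      ∏ i ∈ (range K).erase j, ((j : ℝ) - i)⁻¹ * (x - i) := by
  rw [Lagrange.basis, eval_prod]
  refine prod_congr rfl fun i _ => ?_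
  simp [Lagrange.basisDivisor]

lemma abs_eval_basis_range_mul {K j x : ℕ} (hj : j < K) (hx : K ≤ x) :
    |(Lagrange.basis (range K) (fun i : ℕ => (i : ℝ)) j).eval (x : ℝ)| * ((x : ℝ) - j) =
      x.choose K * K.choose j * (K - j : ℕ) := by
  have hnodal : ((x : ℝ) - j) * ∏ i ∈ (range K).erase j, ((x : ℝ) - i) = x.descFactorial K := by
    rw [mul_prod_erase _ (fun i : ℕ => (x : ℝ) - i) (mem_range.2 hj),
      ← descPochhammer_eval_eq_prod_range, descPochhammer_eval_eq_descFactorial]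
  have hfact : x.descFactorial K = x.choose K * K.choose j * (K - j) * (j ! * (K - 1 - j)!) := by
    rw [Nat.descFactorial_eq_factorial_mul_choose, ← Nat.choose_mul_factorial_mul_factorial hj.le,
      show K - j = K - 1 - j + 1 by omega, Nat.factorial_succ]
    ring
  have hpos : ∀ i ∈ (range K).erase j, 0 ≤ (x : ℝ) - i := fun i hi => by
    have : i < x := (mem_range.1 (mem_of_mem_erase hi)).trans_le hx
    simp only [sub_nonneg, Nat.cast_le]; omega
  rw [eval_basis_range, prod_mul_distrib, prod_inv_distrib, abs_mul, abs_inv, abs_prod,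
    prod_erase_range_abs_sub hj, abs_of_nonneg (prod_nonneg hpos), mul_assoc,
    mul_comm _ ((x : ℝ) - j), hnodal, hfact]
  push_cast
  field_simp

lemma abs_eval_basis_range_le {K j x : ℕ} (hj : j < K) (hx : K ≤ x) :
    |(Lagrange.basis (range K) (fun i : ℕ => (i : ℝ)) j).eval (x : ℝ)| ≤
      x.choose K * K.choose j := by
  have hKx : ((K - j : ℕ) : ℝ) ≤ x - j := by
    rw [Nat.cast_sub hj.le]; gcongr
  have hxj : (0 : ℝ) < x - j := by
    rw [sub_pos, Nat.cast_lt]; omega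
  refine le_of_mul_le_mul_right ?_ hxj
  rw [abs_eval_basis_range_mul hj hx]
  gcongr

lemma abs_eval_interpolate_range_le {K x : ℕ} (r : ℕ → ℝ) (hx : K ≤ x) :
    |(Lagrange.interpolate (range K) (fun i : ℕ => (i : ℝ)) r).eval (x : ℝ)| ≤
      x.choose K * ∑ j ∈ range K, |r j| * K.choose j := by
  rw [Lagrange.interpolate_apply, eval_finsetSum, mul_sum]
  refine (abs_sum_le_sum_abs _ _).trans (sum_le_sum fun j hj => ?_)
  rw [eval_mul, eval_C, abs_mul, mul_left_comm]
  gcongr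
  exact abs_eval_basis_range_le (mem_range.1 hj) hx

lemma sum_range_succ_le_two_mul_of_two_mul_le {f : ℕ → ℝ} {m : ℕ} (h0 : 0 ≤ f 0)
    (hf : ∀ j < m, 2 * f j ≤ f (j + 1)) : ∑ j ∈ range (m + 1), f j ≤ 2 * f m := by
  induction m with
  | zero => simp only [zero_add, sum_range_one]; linarith
  | succ m ih =>
    rw [sum_range_succ]
    linarith [ih fun j hj => hf j (by omega), hf m (by omega)]

lemma two_mul_choose_mul_pow_le {K j : ℕ} {a : ℝ} (ha : 0 ≤ a) (hj : j < K)
    (h : 2 * (j + 1) ≤ a * (K - j)) :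
    2 * (K.choose j * a ^ j) ≤ K.choose (j + 1) * a ^ (j + 1) := by
  have hratio : (K.choose (j + 1) : ℝ) * (j + 1) = K.choose j * (K - j) := by
    rw [← Nat.cast_sub hj.le]; exact_mod_cast Nat.choose_succ_right_eq K j
  have hchoose : 2 * (K.choose j : ℝ) ≤ a * K.choose (j + 1) := by
    refine le_of_mul_le_mul_right ?_ (by positivity : (0 : ℝ) < j + 1)
    calc 2 * (K.choose j : ℝ) * (j + 1) = K.choose j * (2 * (j + 1)) := by ring
      _ ≤ K.choose j * (a * (K - j)) := by gcongr
      _ = a * K.choose (j + 1) * (j + 1) := by rw [mul_assoc, hratio]; ring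
  calc 2 * (K.choose j * a ^ j) = 2 * K.choose j * a ^ j := by ring
    _ ≤ a * K.choose (j + 1) * a ^ j := by gcongr
    _ = K.choose (j + 1) * a ^ (j + 1) := by ring

lemma sum_range_choose_mul_pow_le {m s : ℕ} {a : ℝ} (ha : 0 ≤ a) (h : 2 * m ≤ a * s) :
    ∑ j ∈ range (m + 1), ((m + s).choose j : ℝ) * a ^ j ≤ 2 * ((m + s).choose m * a ^ m) := by
  refine sum_range_succ_le_two_mul_of_two_mul_le (by simp) fun j hj =>
    two_mul_choose_mul_pow_le ha (by omega) ?_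
  have : (s : ℝ) ≤ (m + s : ℕ) - j := by push_cast; linarith [(Nat.cast_le (α := ℝ)).2 hj.le]
  have : ((j : ℝ) + 1) ≤ m := by exact_mod_cast hj
  nlinarith

lemma Nat.choose_le_pow_mul_exp (N k : ℕ) {y : ℝ} (hy : 0 < y) :
    (N.choose k : ℝ) ≤ y ^ k * exp (N / y) :=
  calc (N.choose k : ℝ) ≤ N ^ k / k ! := Nat.choose_le_pow_div k N
    _ = y ^ k * ((N / y) ^ k / k !) := by rw [div_pow]; field_simp
    _ ≤ y ^ k * exp (N / y) := by gcongr; exact pow_div_factorial_le_exp _ (by positivity) k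

lemma four_mul_exp_add_le_eight_pow {t : ℝ} {s : ℕ} (h : t + 2 ≤ s) : 4 * exp (t + s) ≤ 8 ^ s := by
  have he := exp_one_gt_d9
  have he' := exp_one_lt_d9
  have h4 : 4 ≤ exp 2 := by
    rw [show (2 : ℝ) = 1 + 1 by norm_num, exp_add]; nlinarith
  have h8 : exp 2 ≤ 8 := by
    rw [show (2 : ℝ) = 1 + 1 by norm_num, exp_add]; nlinarith
  calc 4 * exp (t + s) ≤ exp 2 * exp (t + s) := by gcongr
    _ = exp (2 * s - (s - (t + 2))) := by rw [← exp_add]; ring_nf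
    _ ≤ exp (2 * s) := exp_le_exp.2 (by linarith)
    _ = exp 2 ^ s := by rw [← exp_nat_mul]; ring_nf
    _ ≤ 8 ^ s := by gcongr

noncomputable def truncNegPowInterpolant (a : ℝ) (m s : ℕ) : ℝ[X] :=
  Lagrange.interpolate (range (m + s)) (fun i : ℕ => (i : ℝ)) fun j => if j ≤ m then (-a) ^ j else 0

section truncNegPowInterpolant

variable {a : ℝ} {m s : ℕ}

lemma eval_truncNegPowInterpolant_of_lt_add {x : ℕ} (hx : x < m + s) :
    (truncNegPowInterpolant a m s).eval (x : ℝ) = if x ≤ m then (-a) ^ x else 0 :=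
  Lagrange.eval_interpolate_at_node _ Nat.cast_injective.injOn (mem_range.2 hx)

lemma natDegree_truncNegPowInterpolant_le :
    (truncNegPowInterpolant a m s).natDegree ≤ m + s - 1 := by
  rw [natDegree_le_iff_degree_le, ← card_range (m + s)]
  exact Lagrange.degree_interpolate_le _ Nat.cast_injective.injOn

lemma abs_eval_truncNegPowInterpolant_le (ha : 0 ≤ a) (hs : 0 < s) (h : 2 * m ≤ a * s) {x : ℕ}
    (hx : m + s ≤ x) :
    |(truncNegPowInterpolant a m s).eval (x : ℝ)| ≤
      2 * x.choose (m + s) * ((m + s).choose m * a ^ m) := by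
  have hvalues : ∑ j ∈ range (m + s), |if j ≤ m then (-a) ^ j else 0| * ((m + s).choose j : ℝ) =
      ∑ j ∈ range (m + 1), ((m + s).choose j : ℝ) * a ^ j := by
    have htail : ∑ j ∈ Ico (m + 1) (m + s),
        |if j ≤ m then (-a) ^ j else 0| * ((m + s).choose j : ℝ) = 0 :=
      sum_eq_zero fun j hj => by
        rw [if_neg (by simp only [mem_Ico] at hj; omega), abs_zero, zero_mul]
    rw [← sum_range_add_sum_Ico _ (by omega : m + 1 ≤ m + s), htail, add_zero]
    refine sum_congr rfl fun j hj => ?_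
    rw [if_pos (by simp only [mem_range] at hj; omega), abs_pow, abs_neg, abs_of_nonneg ha,
      mul_comm]
  calc |(truncNegPowInterpolant a m s).eval (x : ℝ)|
      ≤ x.choose (m + s) * ∑ j ∈ range (m + 1), ((m + s).choose j : ℝ) * a ^ j := by
        rw [← hvalues]; exact abs_eval_interpolate_range_le _ hx
    _ ≤ x.choose (m + s) * (2 * ((m + s).choose m * a ^ m)) := by
        gcongr; exact sum_range_choose_mul_pow_le ha h
    _ = 2 * x.choose (m + s) * ((m + s).choose m * a ^ m) := by ring

lemma abs_eval_truncNegPowInterpolant_le_half (ha : 0 < a) {n : ℕ} (h8 : 8 * (m + s) ≤ a * s)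
    (hs : n / a + 2 ≤ s) {x : ℕ} (hmx : m < x) (hxn : x ≤ n) :
    |(truncNegPowInterpolant a m s).eval (x : ℝ)| ≤ a ^ x / 2 := by
  rcases lt_or_ge x (m + s) with hx | hx
  · rw [eval_truncNegPowInterpolant_of_lt_add hx, if_neg (by omega), abs_zero]
    positivity
  obtain ⟨u, rfl⟩ := Nat.exists_eq_add_of_le hx
  have hs₀ : 0 < s := by
    have : (0 : ℝ) < s := by linarith [div_nonneg n.cast_nonneg ha.le]
    exact_mod_cast this
  have hlarge : ((m + s + u).choose (m + s) : ℝ) ≤ a ^ u * exp (n / a) := by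
    rw [Nat.choose_symm_add]
    refine (Nat.choose_le_pow_mul_exp _ _ ha).trans ?_
    gcongr
  have hsmall : ((m + s).choose m : ℝ) ≤ (a / 8) ^ s * exp s := by
    rw [Nat.choose_symm_add]
    refine (Nat.choose_le_pow_mul_exp _ _ (by positivity : 0 < a / 8)).trans ?_
    gcongr
    rw [div_div_eq_mul_div, div_le_iff₀ ha]
    push_cast; linarith
  calc |(truncNegPowInterpolant a m s).eval ((m + s + u : ℕ) : ℝ)|
      ≤ 2 * (m + s + u).choose (m + s) * ((m + s).choose m * a ^ m) :=
        abs_eval_truncNegPowInterpolant_le ha.le hs₀ (by nlinarith) le_self_add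
    _ ≤ 2 * (a ^ u * exp (n / a)) * ((a / 8) ^ s * exp s * a ^ m) := by gcongr
    _ = a ^ (m + s + u) / 2 * (4 * exp (n / a + s) / 8 ^ s) := by
        rw [exp_add, div_pow]; field_simp; ring
    _ ≤ a ^ (m + s + u) / 2 := by
        refine mul_le_of_le_one_right (by positivity) ?_
        rw [div_le_one (by positivity)]
        exact four_mul_exp_add_le_eight_pow hs

end truncNegPowInterpolant

theorem stmt2 :
    ∃ n₀ : ℕ, ∀ a : ℝ, 40 ≤ a → ∀ n : ℕ, n₀ ≤ n → ∀ ε : ℝ, 0.5 < ε → ε < 1 →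
      ∃ P : Polynomial ℝ,
        (∀ x : ℕ, (x : ℝ) ≤ ε * n → P.eval (x : ℝ) = (-a) ^ x) ∧
        (∀ x : ℕ, ε * n < (x : ℝ) → x ≤ n → |P.eval (x : ℝ)| ≤ a ^ x / 2) ∧
        (P.natDegree : ℝ) ≤ (1 + 10 / a) * ε * n + 3 := by
  refine ⟨0, fun a ha n _ ε hε₁ hε₂ => ?_⟩
  norm_num at hε₁
  have ha₀ : 0 < a := by linarith
  have hεn : 0 ≤ ε * n := by positivity
  set m := ⌊ε * n⌋₊
  set c := ⌈10 * m / a⌉₊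
  have hm : ε * n < m + 1 := Nat.lt_floor_add_one _
  have hm' : (m : ℝ) ≤ ε * n := Nat.floor_le hεn
  have hc : 10 * m ≤ a * c := (div_le_iff₀' ha₀).1 (Nat.le_ceil _)
  have hc' : (c : ℝ) < 10 * m / a + 1 := Nat.ceil_lt_add_one (by positivity)
  refine ⟨truncNegPowInterpolant a m (c + 3), fun x hx => ?_, fun x hx hxn => ?_, ?_⟩
  · rw [eval_truncNegPowInterpolant_of_lt_add (by have := Nat.le_floor hx; omega),
      if_pos (Nat.le_floor hx)]
  · refine abs_eval_truncNegPowInterpolant_le_half ha₀ ?_ ?_ ((Nat.floor_lt hεn).2 hx) hxn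
    · push_cast; nlinarith [mul_nonneg (sub_nonneg.2 ha) (Nat.cast_nonneg (α := ℝ) c)]
    · rw [div_add' _ _ _ ha₀.ne', div_le_iff₀ ha₀]
      push_cast; nlinarith
  · have hdeg : ((truncNegPowInterpolant a m (c + 3)).natDegree : ℝ) ≤ m + c + 2 := by
      exact_mod_cast natDegree_truncNegPowInterpolant_le.trans (by omega)
    have : 10 * (m : ℝ) / a ≤ 10 * ε * n / a := by rw [mul_assoc]; gcongr
    calc _ ≤ (m : ℝ) + c + 2 := hdeg
      _ ≤ (1 + 10 / a) * ε * n + 3 := by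
        rw [add_mul, add_mul, div_mul_eq_mul_div, div_mul_eq_mul_div]; linarith
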